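/- arXiv:1202.2724 — 2 statements merged into one kernel-verified Lean document; each statement's English description precedes it below -/
import Mathlib

section
/- Define p : ℕ → ℝ by p(1) = 3/4, p(2) = 1/2, and p(n+2) = (3/4) p(n+1) - (1/16) p(n). Then the formal power series sum over n ≥ 1 of p(n) z^n equals (12z - z²)/(z² - 12z + 16) as an identity of power series (equivalently, (z² - 12z + 16) * sum p(n) z^n = 12z - z² as formal power series). -/
/-! Multiplying by `X² - 12X + 16` turns the `n`-th coefficient (`n ≥ 3`) into
`16 p(n) - 12 p(n-1) + p(n-2)`, which is sixteen times the recurrence and so vanishes;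
the initial values leave only `12X - X²`. -/

open PowerSeries

section QuadraticMul

variable {R : Type*} [CommRing R] (b c : R) (f : R⟦X⟧)

theorem coeff_zero_X_sq_sub_C_mul_X_add_C_mul :
    coeff 0 ((X ^ 2 - C b * X + C c) * f) = c * coeff 0 f := by
  simp [add_mul, sub_mul, mul_assoc, pow_two]

theorem coeff_one_X_sq_sub_C_mul_X_add_C_mul :
    coeff 1 ((X ^ 2 - C b * X + C c) * f) = -b * coeff 0 f + c * coeff 1 f := by
  simp [add_mul, sub_mul, mul_assoc, pow_two, coeff_succ_X_mul]

theorem coeff_add_two_X_sq_sub_C_mul_X_add_C_mul (n : ℕ) :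
    coeff (n + 2) ((X ^ 2 - C b * X + C c) * f) =
      coeff n f - b * coeff (n + 1) f + c * coeff (n + 2) f := by
  simp [add_mul, sub_mul, mul_assoc, pow_two, coeff_succ_X_mul]

end QuadraticMul

theorem path_generating_function (p : ℕ → ℝ)
    (hp1 : p 1 = 3 / 4) (hp2 : p 2 = 1 / 2)
    (hrec : ∀ n, 1 ≤ n → p (n + 2) = (3 / 4) * p (n + 1) - (1 / 16) * p n) :
    (PowerSeries.X ^ 2 - 12 * PowerSeries.X + 16) *
        PowerSeries.mk (fun n => if n = 0 then (0 : ℝ) else p n) =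
      12 * PowerSeries.X - PowerSeries.X ^ 2 := by
  rw [show (12 : ℝ⟦X⟧) = C 12 from (map_ofNat C 12).symm,
    show (16 : ℝ⟦X⟧) = C 16 from (map_ofNat C 16).symm]
  ext n
  rcases n with _ | _ | _ | n
  · simp [coeff_zero_X_sq_sub_C_mul_X_add_C_mul]
  · norm_num [coeff_one_X_sq_sub_C_mul_X_add_C_mul, hp1]
  · norm_num [coeff_add_two_X_sq_sub_C_mul_X_add_C_mul, hp1, hp2, coeff_X_pow]
  · simp [coeff_add_two_X_sq_sub_C_mul_X_add_C_mul, coeff_X_pow, hrec (n + 1) (by omega)]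
    ring
end

section
/- Define q : ℕ → ℝ by q(3) = 9/32, q(4) = 47/256, and q(n+2) = (3/4) q(n+1) - (1/16) q(n) for n ≥ 3. Then (1/n) * log(q(n)) converges to log((3+√5)/8) as n tends to infinity. -/
/-!
The roots of `x² = (3/4) x - 1/16` are `α, β = (3 ± √5)/8`, and the initial values are
`q 3 = α³ + β³`, `q 4 = α⁴ + β⁴`, so `q n = αⁿ + βⁿ` for `n ≥ 3`. Since `|β| < α`,
`log (αⁿ + βⁿ) = n log α + log (1 + (β/α)ⁿ)` with the last term tending to `0`.
-/

open Filter Topology Real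

theorem eq_pow_add_pow_of_linear_recurrence {R : Type*} [CommRing R] {q : ℕ → R}
    {a b c d : R} {k : ℕ} (ha : a ^ 2 = c * a - d) (hb : b ^ 2 = c * b - d)
    (h₀ : q k = a ^ k + b ^ k) (h₁ : q (k + 1) = a ^ (k + 1) + b ^ (k + 1))
    (hrec : ∀ n, k ≤ n → q (n + 2) = c * q (n + 1) - d * q n) :
    ∀ n, k ≤ n → q n = a ^ n + b ^ n := by
  suffices h : ∀ m, q (k + m) = a ^ (k + m) + b ^ (k + m) ∧
      q (k + m + 1) = a ^ (k + m + 1) + b ^ (k + m + 1) by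
    intro n hn
    obtain ⟨m, rfl⟩ := Nat.exists_eq_add_of_le hn
    exact (h m).1
  intro m
  induction m with
  | zero => exact ⟨h₀, h₁⟩
  | succ m ih =>
    refine ⟨ih.2, ?_⟩
    rw [show k + (m + 1) + 1 = k + m + 2 by ring, hrec _ (Nat.le_add_right k m), ih.1, ih.2]
    linear_combination -a ^ (k + m) * ha - b ^ (k + m) * hb

theorem tendsto_log_pow_add_pow_div {a b : ℝ} (ha : 0 < a) (hb : |b| < a) :
    Tendsto (fun n : ℕ => log (a ^ n + b ^ n) / n) atTop (𝓝 (log a)) := by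
  have hr : |b / a| < 1 := by rwa [abs_div, abs_of_pos ha, div_lt_one ha]
  have hlog : Tendsto (fun n : ℕ => log (1 + (b / a) ^ n)) atTop (𝓝 0) := by
    have hone : Tendsto (fun n : ℕ => 1 + (b / a) ^ n) atTop (𝓝 1) := by
      simpa using (tendsto_pow_atTop_nhds_zero_of_abs_lt_one hr).const_add 1
    simpa using hone.log one_ne_zero
  have hlim : Tendsto (fun n : ℕ => log a + log (1 + (b / a) ^ n) / n) atTop (𝓝 (log a)) := by
    simpa using (hlog.div_atTop tendsto_natCast_atTop_atTop).const_add (log a)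
  refine hlim.congr' ?_
  filter_upwards [eventually_ne_atTop 0] with n hn
  have hpos : 0 < 1 + (b / a) ^ n := by
    have : |(b / a) ^ n| < 1 := by rw [abs_pow]; exact pow_lt_one₀ (abs_nonneg _) hr hn
    linarith [neg_abs_le ((b / a) ^ n)]
  rw [show a ^ n + b ^ n = a ^ n * (1 + (b / a) ^ n) by
      rw [mul_add, mul_one, div_pow, mul_div_cancel₀ _ (pow_ne_zero n ha.ne')],
    log_mul (by positivity) hpos.ne', log_pow]
  field_simp

theorem cycle_h_limit (q : ℕ → ℝ)
    (hq3 : q 3 = 9 / 32) (hq4 : q 4 = 47 / 256)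
    (hrec : ∀ n, 3 ≤ n → q (n + 2) = (3 / 4) * q (n + 1) - (1 / 16) * q n) :
    Filter.Tendsto (fun n : ℕ => (1 / (n : ℝ)) * Real.log (q n)) Filter.atTop
      (nhds (Real.log ((3 + Real.sqrt 5) / 8))) := by
  have h5 : √5 ^ 2 = 5 := sq_sqrt (by norm_num)
  have hs₀ : 0 < √5 := sqrt_pos.2 (by norm_num)
  have hclosed : ∀ n, 3 ≤ n → q n = ((3 + √5) / 8) ^ n + ((3 - √5) / 8) ^ n :=
    eq_pow_add_pow_of_linear_recurrence (by linear_combination h5 / 64)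
      (by linear_combination h5 / 64) (by rw [hq3]; linear_combination -9 / 256 * h5)
      (by rw [hq4]; linear_combination -(√5 ^ 2 + 59) / 2048 * h5) hrec
  have hβα : |(3 - √5) / 8| < (3 + √5) / 8 := abs_lt.mpr ⟨by linarith, by linarith⟩
  refine (tendsto_log_pow_add_pow_div (by positivity) hβα).congr' ?_
  filter_upwards [eventually_ge_atTop 3] with n hn
  rw [hclosed n hn, one_div_mul_eq_div]
end
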